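/- arXiv:2008.13232 — 3 statements merged into one kernel-verified Lean document; each statement's English description precedes it below -/
import Mathlib

section
/- Let α = (α₁,…,α_s) be a composition with s even. Then the rank generating function satisfies r(q;α) = r(q; α₁,…,α_{s−2}, α_{s−1} − 1) + q · r(q; α₁,…,α_{s−1}, α_s − 1), where by convention F(α₁,…,α_{s−1},0) = F(α₁,…,α_{s−1}). -/
open Polynomial

/-- The order relation of the fence poset `F(α)` on positions `0,…,α.sum`
(position `p` corresponds to the element `x_{p+1}`).  Segment `j` (0-indexed)
occupies positions `(α.take j).sum` through `(α.take (j+1)).sum`; even-indexed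
segments are ascending and odd-indexed segments are descending. -/
def fenceLe (α : List ℕ) (p q : ℕ) : Prop :=
  p = q ∨ ∃ j < α.length,
    if j % 2 = 0 then
      (α.take j).sum ≤ p ∧ p ≤ q ∧ q ≤ (α.take (j + 1)).sum
    else
      (α.take j).sum ≤ q ∧ q ≤ p ∧ p ≤ (α.take (j + 1)).sum

/-- `I` is a lower order ideal of the fence `F(α)`. -/
def IsFenceIdeal (α : List ℕ) (I : Finset (Fin (α.sum + 1))) : Prop :=
  ∀ p q : Fin (α.sum + 1), fenceLe α p q → q ∈ I → p ∈ I

/-- The number of lower order ideals of `F(α)` of cardinality `k`,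
i.e. the size of the `k`-th rank of the distributive lattice `L(α)`. -/
noncomputable def fenceRk (α : List ℕ) (k : ℕ) : ℕ :=
  Nat.card {I : Finset (Fin (α.sum + 1)) // IsFenceIdeal α I ∧ I.card = k}

/-- The rank generating function `r(q;α)` of `L(α)`. -/
noncomputable def rpoly (α : List ℕ) : Polynomial ℕ :=
  ∑ k ∈ Finset.range (α.sum + 2), Polynomial.C (fenceRk α k) * Polynomial.X ^ k

/-- Deletion of a trailing `0` part: the convention `F(α₁,…,α_{s-1},0) = F(α₁,…,α_{s-1})`. -/
def normComp (l : List ℕ) : List ℕ :=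
  if l.getLast? = some 0 then l.dropLast else l

/-!
Since `s` is even, the last segment of `F(α)` is descending, so the last position `N = α.sum` is a
minimal element lying below that whole segment. An ideal avoiding `N` therefore avoids the whole
last segment, including the peak it shares with the ascending segment before it: it is exactly an
ideal of `F(α₁,…,α_{s-2},α_{s-1}-1)`. An ideal containing `N` is `N` together with an arbitrary
ideal of `F(α₁,…,α_{s-1},α_s-1)`, contributing the factor `q`.
-/

theorem fenceLe.eq_or_le_sum {α : List ℕ} {p q : ℕ} (h : fenceLe α p q) :
    p = q ∨ p ≤ α.sum ∧ q ≤ α.sum := by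
  obtain h | ⟨j, -, hj⟩ := h
  · exact .inl h
  · have := (α.take_sublist (j + 1)).sum_le_sum fun _ _ => Nat.zero_le _
    split_ifs at hj <;> omega

theorem fenceLe_append_singleton (α : List ℕ) (c p q : ℕ) :
    fenceLe (α ++ [c]) p q ↔ fenceLe α p q ∨
      if α.length % 2 = 0 then α.sum ≤ p ∧ p ≤ q ∧ q ≤ α.sum + c
      else α.sum ≤ q ∧ q ≤ p ∧ p ≤ α.sum + c := by
  simp only [fenceLe, List.length_append, List.length_singleton, Nat.exists_lt_succ_right,
    ← or_assoc]
  rw [List.take_append_of_le_length le_rfl, List.take_length,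
    List.take_of_length_le (by simp), List.sum_append, List.sum_singleton]
  refine or_congr_left (or_congr_right (exists_congr fun j => and_congr_right fun hj => ?_))
  rw [List.take_append_of_le_length hj.le, List.take_append_of_le_length hj]

theorem fenceLe_append_zero (α : List ℕ) (p q : ℕ) : fenceLe (α ++ [0]) p q ↔ fenceLe α p q := by
  rw [fenceLe_append_singleton]
  refine ⟨fun h => h.elim id fun h => .inl ?_, .inl⟩
  split_ifs at h <;> omega

open Finset

-- Ideals as sets of positions in `ℕ`, so that fences of different sizes share one ambient type.
noncomputable def fenceIdeals (α : List ℕ) : Finset (Finset ℕ) :=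
  open scoped Classical in
  (range (α.sum + 1)).powerset.filter fun I => ∀ p q, fenceLe α p q → q ∈ I → p ∈ I

theorem mem_fenceIdeals {α : List ℕ} {I : Finset ℕ} :
    I ∈ fenceIdeals α ↔ I ⊆ range (α.sum + 1) ∧ ∀ p q, fenceLe α p q → q ∈ I → p ∈ I := by
  simp [fenceIdeals]

theorem map_filter_isFenceIdeal (α : List ℕ) [DecidablePred (IsFenceIdeal α)] :
    (univ.filter (IsFenceIdeal α)).map (mapEmbedding Fin.valEmbedding).toEmbedding =
      fenceIdeals α := by
  ext J
  simp only [mem_map, mem_filter, mem_univ, true_and, mem_fenceIdeals, IsFenceIdeal]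
  constructor
  · rintro ⟨I, hI, rfl⟩
    simp only [RelEmbedding.coe_toEmbedding, mapEmbedding_apply, mem_map, Fin.valEmbedding_apply]
    refine ⟨fun x hx => ?_, ?_⟩
    · obtain ⟨y, -, rfl⟩ := mem_map.1 hx
      exact mem_range.2 y.isLt
    rintro p _ hpq ⟨q, hq, rfl⟩
    have hp : p < α.sum + 1 := by have := hpq.eq_or_le_sum; omega
    exact ⟨⟨p, hp⟩, hI _ q hpq hq, rfl⟩
  · rintro ⟨hsub, hJ⟩
    have hlt : ∀ m ∈ J, m < α.sum + 1 := fun m hm => mem_range.1 (hsub hm)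
    refine ⟨J.attachFin hlt, fun p q hpq hq => ?_, map_valEmbedding_attachFin hlt⟩
    rw [mem_attachFin] at hq ⊢
    exact hJ p q hpq hq

theorem rpoly_eq_sum_fenceIdeals (α : List ℕ) : rpoly α = ∑ I ∈ fenceIdeals α, X ^ #I := by
  classical
  rw [← map_filter_isFenceIdeal, sum_map]
  simp only [RelEmbedding.coe_toEmbedding, mapEmbedding_apply, card_map]
  rw [rpoly, ← sum_fiberwise_of_maps_to (g := card) (t := range (α.sum + 2))
    fun I _ => mem_range.2 (Nat.lt_succ_of_le ((card_le_univ I).trans_eq (Fintype.card_fin _)))]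
  refine sum_congr rfl fun k _ => ?_
  rw [sum_congr rfl fun I hI => by rw [(mem_filter.1 hI).2], sum_const, fenceRk,
    Nat.card_eq_fintype_card, Fintype.card_subtype, filter_filter, nsmul_eq_mul, ← C_eq_natCast,
    Nat.cast_id]

theorem rpoly_append_zero (α : List ℕ) : rpoly (α ++ [0]) = rpoly α := by
  have hideals : fenceIdeals (α ++ [0]) = fenceIdeals α := by
    ext I
    simp only [mem_fenceIdeals, fenceLe_append_zero, List.sum_append, List.sum_singleton, add_zero]
  rw [rpoly_eq_sum_fenceIdeals, rpoly_eq_sum_fenceIdeals, hideals]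

theorem rpoly_normComp (α : List ℕ) : rpoly (normComp α) = rpoly α := by
  unfold normComp
  split_ifs with h
  · rw [← rpoly_append_zero, List.dropLast_append_getLast? 0 h]
  · rfl

section EvenPrefix

variable {γ : List ℕ} {b a p q : ℕ}

theorem fenceLe_append_pair (hγ : Even γ.length) :
    fenceLe (γ ++ [b, a]) p q ↔ fenceLe γ p q ∨ (γ.sum ≤ p ∧ p ≤ q ∧ q ≤ γ.sum + b) ∨
      (γ.sum + b ≤ q ∧ q ≤ p ∧ p ≤ γ.sum + b + a) := by
  have hγ := Nat.even_iff.mp hγ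
  rw [show γ ++ [b, a] = γ ++ [b] ++ [a] by simp, fenceLe_append_singleton,
    fenceLe_append_singleton, if_pos hγ, List.length_append, List.length_singleton,
    if_neg (by omega), List.sum_append, List.sum_singleton, or_assoc]

theorem fenceLe_append_pair_iff_of_lt (hγ : Even γ.length) (hq : q < γ.sum + b) :
    fenceLe (γ ++ [b, a]) p q ↔ fenceLe (γ ++ [b - 1]) p q := by
  rw [fenceLe_append_pair hγ, fenceLe_append_singleton, if_pos (Nat.even_iff.mp hγ)]
  exact or_congr_right (by omega)

theorem fenceLe_append_pair_iff_of_lt_sum (hγ : Even γ.length) (hp : p < γ.sum + b + a) :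
    fenceLe (γ ++ [b, a]) p q ↔ fenceLe (γ ++ [b, a - 1]) p q := by
  rw [fenceLe_append_pair hγ, fenceLe_append_pair hγ]
  exact or_congr_right (by omega)

theorem eq_of_fenceLe_append_pair_sum (hγ : Even γ.length) (ha : 0 < a)
    (h : fenceLe (γ ++ [b, a]) p (γ.sum + b + a)) : p = γ.sum + b + a := by
  obtain h | h | h := (fenceLe_append_pair hγ).1 h
  · have := h.eq_or_le_sum
    omega
  all_goals omega

theorem fenceLe_append_pair_sum (hγ : Even γ.length) (hq : γ.sum + b ≤ q)
    (hq' : q ≤ γ.sum + b + a) : fenceLe (γ ++ [b, a]) (γ.sum + b + a) q :=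
  (fenceLe_append_pair hγ).2 (.inr (.inr ⟨hq, hq', le_rfl⟩))

theorem filter_notMem_fenceIdeals_append_pair (hγ : Even γ.length) (hb : 0 < b) :
    (fenceIdeals (γ ++ [b, a])).filter (γ.sum + b + a ∉ ·) = fenceIdeals (γ ++ [b - 1]) := by
  have hsum : (γ ++ [b, a]).sum = γ.sum + b + a := by
    simp only [List.sum_append, List.sum_cons, List.sum_nil]; omega
  have hsum' : (γ ++ [b - 1]).sum + 1 = γ.sum + b := by
    simp only [List.sum_append, List.sum_cons, List.sum_nil]; omega
  ext I
  simp only [mem_filter, mem_fenceIdeals, hsum, hsum']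
  constructor
  · rintro ⟨⟨hsub, hI⟩, hN⟩
    have hsub' : I ⊆ range (γ.sum + b) := fun q hq => by
      have := mem_range.1 (hsub hq)
      by_contra hq'
      exact hN (hI _ q (fenceLe_append_pair_sum hγ (by simpa using hq') (by omega)) hq)
    refine ⟨hsub', fun p q hpq hq => hI p q ?_ hq⟩
    exact (fenceLe_append_pair_iff_of_lt hγ (mem_range.1 (hsub' hq))).2 hpq
  · rintro ⟨hsub, hI⟩
    refine ⟨⟨hsub.trans (range_subset_range.2 (by omega)), fun p q hpq hq => hI p q ?_ hq⟩,
      fun hN => by simpa using hsub hN⟩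
    exact (fenceLe_append_pair_iff_of_lt hγ (mem_range.1 (hsub hq))).1 hpq

theorem filter_mem_fenceIdeals_append_pair (hγ : Even γ.length) (ha : 0 < a) :
    (fenceIdeals (γ ++ [b, a])).filter (γ.sum + b + a ∈ ·) =
      (fenceIdeals (γ ++ [b, a - 1])).image (insert (γ.sum + b + a)) := by
  set N := γ.sum + b + a
  have hsum : (γ ++ [b, a]).sum = N := by
    simp only [N, List.sum_append, List.sum_cons, List.sum_nil]; omega
  have hsum' : (γ ++ [b, a - 1]).sum + 1 = N := by
    simp only [N, List.sum_append, List.sum_cons, List.sum_nil]; omega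
  ext I
  simp only [mem_filter, mem_image, mem_fenceIdeals, hsum, hsum']
  constructor
  · rintro ⟨⟨hsub, hI⟩, hN⟩
    refine ⟨I.erase N, ⟨fun x hx => ?_, fun p q hpq hq => ?_⟩, insert_erase hN⟩
    · have := mem_range.1 (hsub (mem_of_mem_erase hx))
      exact mem_range.2 (lt_of_le_of_ne (Nat.le_of_lt_succ this) (ne_of_mem_erase hx))
    · have hqN := ne_of_mem_erase hq
      have hqN' := mem_range.1 (hsub (mem_of_mem_erase hq))
      have hpN : p < N := by have := hpq.eq_or_le_sum; omega
      exact mem_erase.2 ⟨hpN.ne,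
        hI p q ((fenceLe_append_pair_iff_of_lt_sum hγ hpN).2 hpq) (mem_of_mem_erase hq)⟩
  · rintro ⟨J, ⟨hsub, hJ⟩, rfl⟩
    refine ⟨⟨insert_subset (self_mem_range_succ N) (hsub.trans (range_subset_range.2 (by omega))),
      fun p q hpq hq => ?_⟩, mem_insert_self N J⟩
    by_cases hpN : p = N
    · exact hpN ▸ mem_insert_self N J
    have hqN : q ≤ N := by
      rcases mem_insert.1 hq with rfl | hq
      · exact le_rfl
      · exact (mem_range.1 (hsub hq)).le
    have hpN : p < N := by have := hpq.eq_or_le_sum; omega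
    rcases mem_insert.1 hq with rfl | hq
    · exact absurd (eq_of_fenceLe_append_pair_sum hγ ha hpq) hpN.ne
    · exact mem_insert_of_mem (hJ p q ((fenceLe_append_pair_iff_of_lt_sum hγ hpN).1 hpq) hq)

end EvenPrefix

/-- Here `α = γ ++ [b, a]`, so `b = α_{s-1}` and `a = α_s`. -/
theorem rpoly_rec_even_general (γ : List ℕ) (b a : ℕ)
    (hb : 0 < b) (ha : 0 < a) (heven : Even (γ ++ [b, a]).length) :
    rpoly (γ ++ [b, a]) =
      rpoly (normComp (γ ++ [b - 1])) +
        Polynomial.X * rpoly (normComp (γ ++ [b, a - 1])) := by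
  have hγ : Even γ.length := by simpa [Nat.even_add] using heven
  set N := γ.sum + b + a
  have hN : ↑(fenceIdeals (γ ++ [b, a - 1])) ⊆ {J : Finset ℕ | N ∉ J} := fun J hJ hNJ => by
    have := mem_range.1 ((mem_fenceIdeals.1 hJ).1 hNJ)
    simp only [List.sum_append, List.sum_cons, List.sum_nil] at this
    omega
  rw [rpoly_normComp, rpoly_normComp, rpoly_eq_sum_fenceIdeals, rpoly_eq_sum_fenceIdeals,
    rpoly_eq_sum_fenceIdeals, ← sum_filter_not_add_sum_filter _ (N ∈ ·),
    filter_notMem_fenceIdeals_append_pair hγ hb, filter_mem_fenceIdeals_append_pair hγ ha,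
    sum_image (insert_erase_invOn.2.injOn.mono hN), mul_sum]
  refine congrArg _ (sum_congr rfl fun J hJ => ?_)
  rw [card_insert_of_notMem (hN hJ), pow_succ']

/-- The recursion for the rank generating function when the number of segments is even:
`r(q;α) = r(q;α₁,…,α_{s-2},α_{s-1}-1) + q·r(q;α₁,…,α_{s-1},α_s-1)`.
Here `α = γ ++ [b, a]`, so `b = α_{s-1}` and `a = α_s`. -/
theorem rpoly_rec_even (γ : List ℕ) (b a : ℕ) (hγ : ∀ x ∈ γ, 0 < x)
    (hb : 0 < b) (ha : 0 < a) (heven : Even (γ ++ [b, a]).length) :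
    rpoly (γ ++ [b, a]) =
      rpoly (normComp (γ ++ [b - 1])) +
        Polynomial.X * rpoly (normComp (γ ++ [b, a - 1])) :=
  rpoly_rec_even_general γ b a hb ha heven
end

section
/- If a finite ranked poset P of rank n admits a bottom centered chain decomposition (every chain C in the decomposition has center n/2 or (n−1)/2), then the rank sequence r₀,…,r_n of P is bottom interlacing, i.e., r_n ≤ r₀ ≤ r_{n−1} ≤ r₁ ≤ … ≤ r_{⌊n/2⌋}. -/
/-!
Along a saturated chain the rank goes up by exactly one at each step, so a chain with bottom `x`
and top `y` contains exactly one element of each rank in `[ρ x, ρ y]` and none of any other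
rank. Hence `r_k` counts the chains of the decomposition whose rank interval contains `k`. When
every interval has center `n/2` or `(n-1)/2`, an interval containing `n - i` also contains `i`,
and one containing `i` also contains `n - 1 - i` (for `i` in the relevant range), which gives
the two families of inequalities.
-/

/-- `C` is a saturated chain in the poset `P`: it is nonempty, totally ordered,
and consecutive elements of `C` are covering pairs of `P`. -/
def IsSaturatedChain {P : Type*} [PartialOrder P] (C : Finset P) : Prop :=
  C.Nonempty ∧ (∀ x ∈ C, ∀ y ∈ C, x ≤ y ∨ y ≤ x) ∧
    ∀ x ∈ C, ∀ y ∈ C, x < y → (∀ z ∈ C, ¬(x < z ∧ z < y)) → x ⋖ y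

/-- `x` and `y` are the bottom and top elements of the chain `C`. -/
def ChainEnds {P : Type*} [PartialOrder P] (C : Finset P) (x y : P) : Prop :=
  x ∈ C ∧ y ∈ C ∧ (∀ z ∈ C, x ≤ z) ∧ ∀ z ∈ C, z ≤ y

/-- `𝒞` is a chain decomposition of `P`: a partition of `P` into saturated chains. -/
def IsChainDecomp {P : Type*} [PartialOrder P] (𝒞 : Finset (Finset P)) : Prop :=
  (∀ C ∈ 𝒞, IsSaturatedChain C) ∧
  (∀ C ∈ 𝒞, ∀ D ∈ 𝒞, C ≠ D → Disjoint C D) ∧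
  ∀ x : P, ∃ C ∈ 𝒞, x ∈ C

/-- The sequence `a₀,…,a_n` is top interlacing:
`a₀ ≤ a_n ≤ a₁ ≤ a_{n-1} ≤ … ≤ a_{⌈n/2⌉}`. -/
def TopInterlacing (r : ℕ → ℕ) (n : ℕ) : Prop :=
  (∀ i, 2 * i < n → r i ≤ r (n - i)) ∧ ∀ i, 2 * i + 1 < n → r (n - i) ≤ r (i + 1)

/-- The sequence `a₀,…,a_n` is bottom interlacing:
`a_n ≤ a₀ ≤ a_{n-1} ≤ a₁ ≤ … ≤ a_{⌊n/2⌋}`. -/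
def BottomInterlacing (r : ℕ → ℕ) (n : ℕ) : Prop :=
  (∀ i, 2 * i < n → r (n - i) ≤ r i) ∧ ∀ i, 2 * i + 1 < n → r i ≤ r (n - 1 - i)

section

open Finset

theorem Nat.card_subtype_eq_sum_card_filter {P : Type*} [DecidableEq P] {𝒞 : Finset (Finset P)}
    (hdisj : ∀ C ∈ 𝒞, ∀ D ∈ 𝒞, C ≠ D → Disjoint C D) (hcover : ∀ x : P, ∃ C ∈ 𝒞, x ∈ C)
    (p : P → Prop) [DecidablePred p] :
    Nat.card {x // p x} = ∑ C ∈ 𝒞, #{x ∈ C | p x} := by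
  have hset : {x | p x} = ((𝒞.biUnion fun C => {x ∈ C | p x} : Finset P) : Set P) := by
    ext x
    simp only [Set.mem_ofPred_eq, coe_biUnion, coe_filter, Set.mem_iUnion, exists_prop]
    obtain ⟨C, hC, hxC⟩ := hcover x
    exact ⟨fun hx => ⟨C, hC, hxC, hx⟩, fun ⟨_, _, _, hx⟩ => hx⟩
  calc Nat.card {x // p x} = #(𝒞.biUnion fun C => {x ∈ C | p x}) := by
        rw [← Set.ncard_coe_finset, ← hset, ← Nat.card_coe_set_eq]; rfl
    _ = ∑ C ∈ 𝒞, #{x ∈ C | p x} :=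
        card_biUnion fun C hC D hD h => disjoint_filter_filter (hdisj C hC D hD h)

variable {P : Type*} [PartialOrder P] {ρ : P → ℕ}

theorem strictMono_of_covBy_add_one [Finite P] (hcov : ∀ x y : P, x ⋖ y → ρ y = ρ x + 1) :
    StrictMono ρ := by
  have := IsStronglyAtomic.of_wellFounded_lt (α := P) wellFounded_lt
  intro a b hab
  induction a using WellFoundedGT.induction with
  | _ a ih =>
    obtain ⟨c, hac, hcb⟩ := exists_covBy_le_of_lt hab
    have hρac : ρ a < ρ c := by rw [hcov a c hac]; exact Nat.lt_add_one _
    rcases hcb.eq_or_lt with rfl | hcb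
    · exact hρac
    · exact hρac.trans (ih c hac.lt hcb)

namespace IsSaturatedChain

variable {C : Finset P}

theorem exists_chainEnds (hC : IsSaturatedChain C) : ∃ x y, ChainEnds C x y := by
  obtain ⟨hne, htot, -⟩ := hC
  obtain ⟨x, hx⟩ := C.exists_minimal hne
  obtain ⟨y, hy⟩ := C.exists_maximal hne
  exact ⟨x, y, hx.1, hy.1, fun z hz => (htot x hx.1 z hz).elim id (hx.2 hz),
    fun z hz => (htot z hz y hy.1).elim id (hy.2 hz)⟩

theorem exists_covBy_mem (hC : IsSaturatedChain C) {z y : P} (hz : z ∈ C) (hy : y ∈ C)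
    (hzy : z < y) : ∃ w ∈ C, z ⋖ w := by
  classical
  obtain ⟨w, hw⟩ := exists_minimal (s := {t ∈ C | z < t}) ⟨y, mem_filter.2 ⟨hy, hzy⟩⟩
  obtain ⟨hwC, hzw⟩ := mem_filter.1 hw.1
  refine ⟨w, hwC, hC.2.2 z hz w hwC hzw fun t ht ⟨hzt, htw⟩ => ?_⟩
  exact htw.not_ge (hw.2 (mem_filter.2 ⟨ht, hzt⟩) htw.le)

theorem exists_rank_eq (hC : IsSaturatedChain C) (hcov : ∀ x y : P, x ⋖ y → ρ y = ρ x + 1)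
    {x y : P} (hxy : ChainEnds C x y) {k : ℕ} (hxk : ρ x ≤ k) (hky : k ≤ ρ y) :
    ∃ z ∈ C, ρ z = k := by
  induction k, hxk using Nat.le_induction with
  | base => exact ⟨x, hxy.1, rfl⟩
  | succ k _ ih =>
    obtain ⟨z, hz, rfl⟩ := ih (by omega)
    have hzy : z < y := (hxy.2.2.2 z hz).lt_of_ne (by rintro rfl; omega)
    obtain ⟨w, hw, hzw⟩ := hC.exists_covBy_mem hz hxy.2.1 hzy
    exact ⟨w, hw, hcov z w hzw⟩

theorem card_filter_rank_eq (hC : IsSaturatedChain C) (hρ : StrictMono ρ)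
    (hcov : ∀ x y : P, x ⋖ y → ρ y = ρ x + 1) {x y : P} (hxy : ChainEnds C x y) (k : ℕ) :
    #{z ∈ C | ρ z = k} = if ρ x ≤ k ∧ k ≤ ρ y then 1 else 0 := by
  split_ifs with h
  · obtain ⟨z, hz, hzk⟩ := hC.exists_rank_eq hcov hxy h.1 h.2
    refine le_antisymm (card_le_one.2 fun a ha b hb => ?_) (card_pos.2 ⟨z, mem_filter.2 ⟨hz, hzk⟩⟩)
    obtain ⟨haC, rfl⟩ := mem_filter.1 ha
    obtain ⟨hbC, hab⟩ := mem_filter.1 hb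
    rcases hC.2.1 a haC b hbC with hle | hle
    · exact hle.eq_of_not_lt fun hlt => (hρ hlt).ne hab.symm
    · exact (hle.eq_of_not_lt fun hlt => (hρ hlt).ne hab).symm
  · refine card_eq_zero.2 (filter_eq_empty_iff.2 fun z hz hzk => h ?_)
    exact hzk ▸ ⟨hρ.monotone (hxy.2.2.1 z hz), hρ.monotone (hxy.2.2.2 z hz)⟩

end IsSaturatedChain

theorem IsChainDecomp.card_rank_le [Finite P] {𝒞 : Finset (Finset P)} (hCD : IsChainDecomp 𝒞)
    (hcov : ∀ x y : P, x ⋖ y → ρ y = ρ x + 1) {j k : ℕ}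
    (hjk : ∀ C ∈ 𝒞, ∀ x y, ChainEnds C x y → ρ x ≤ j → j ≤ ρ y → ρ x ≤ k ∧ k ≤ ρ y) :
    Nat.card {z // ρ z = j} ≤ Nat.card {z // ρ z = k} := by
  classical
  obtain ⟨hchains, hdisj, hcover⟩ := hCD
  have hρ := strictMono_of_covBy_add_one hcov
  simp only [Nat.card_subtype_eq_sum_card_filter hdisj hcover]
  refine sum_le_sum fun C hC => ?_
  obtain ⟨x, y, hxy⟩ := (hchains C hC).exists_chainEnds
  simp only [(hchains C hC).card_filter_rank_eq hρ hcov hxy]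
  by_cases hj : ρ x ≤ j ∧ j ≤ ρ y
  · simp [hj, hjk C hC x y hxy hj.1 hj.2]
  · simp [hj]

end

theorem bottomInterlacing_of_bottomCentered_CD_general {P : Type*} [Finite P] [PartialOrder P]
    (ρ : P → ℕ) (hcov : ∀ x y : P, x ⋖ y → ρ y = ρ x + 1)
    (n : ℕ)
    (𝒞 : Finset (Finset P)) (hCD : IsChainDecomp 𝒞)
    (hcen : ∀ C ∈ 𝒞, ∀ x y : P, ChainEnds C x y →
      ρ x + ρ y = n ∨ ρ x + ρ y + 1 = n) :
    BottomInterlacing (fun k => Nat.card {z : P // ρ z = k}) n := by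
  refine ⟨fun i hi => hCD.card_rank_le hcov ?_, fun i hi => hCD.card_rank_le hcov ?_⟩ <;>
  · intro C hC x y hxy hj hj'
    have := hcen C hC x y hxy
    omega

/-- If a finite ranked poset `P` of rank `n` (with rank function `ρ`) admits a
bottom centered chain decomposition (every chain has center `n/2` or `(n-1)/2`,
i.e. the ranks of its endpoints sum to `n` or `n-1`), then the rank sequence
of `P` is bottom interlacing. -/
theorem bottomInterlacing_of_bottomCentered_CD {P : Type*} [Finite P] [PartialOrder P]
    (ρ : P → ℕ) (hcov : ∀ x y : P, x ⋖ y → ρ y = ρ x + 1)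
    (hmin : ∀ x : P, IsMin x → ρ x = 0)
    (n : ℕ) (hle : ∀ x, ρ x ≤ n) (hex : ∃ x, ρ x = n)
    (𝒞 : Finset (Finset P)) (hCD : IsChainDecomp 𝒞)
    (hcen : ∀ C ∈ 𝒞, ∀ x y : P, ChainEnds C x y →
      ρ x + ρ y = n ∨ ρ x + ρ y + 1 = n) :
    BottomInterlacing (fun k => Nat.card {z : P // ρ z = k}) n :=
  bottomInterlacing_of_bottomCentered_CD_general ρ hcov n 𝒞 hCD hcen
end

section
/- For any composition α = (a, b) with two parts, the rank sequence of the lattice L(α) of lower order ideals of the fence F(a,b) is bottom interlacing. -/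
open Polynomial

/-!
The peak `x_{a+1}` of `F(a,b)` is its maximum, so the only ideal containing it is the whole
fence. Every other ideal is an initial segment `x_1, …, x_i` (`i ≤ a`) of the ascending chain
together with a final segment `x_{a+b+2-j}, …, x_{a+b+1}` (`j ≤ b`) of the descending one.
Hence `L(a,b)` is the product of chains `[0,a] × [0,b]` with a top element added, and for
`k ≤ a + b` the rank `r_k` counts the lattice points on the antidiagonal `i + j = k` of the box,
namely `min a k + 1 - (k - b)`. This sequence is symmetric and unimodal, and `r_{a+b+1} = 1`,
which gives bottom interlacing.
-/

open Finset

lemma exists_forall_iff_lt_of_downClosed {S : ℕ → Prop} {n : ℕ}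
    (hS : ∀ x y, x ≤ y → y ≤ n → S y → S x) (hn : ¬ S n) :
    ∃ i ≤ n, ∀ x ≤ n, S x ↔ x < i := by
  classical
  have hex : ∃ x, ¬ S x := ⟨n, hn⟩
  refine ⟨Nat.find hex, Nat.find_min' hex hn, fun x hx => ⟨fun hSx => ?_, fun hxi => ?_⟩⟩
  · by_contra! hix
    exact Nat.find_spec hex (hS _ x hix hx hSx)
  · exact not_not.1 (Nat.find_min hex hxi)

lemma card_antidiagonal_filter_le (a b k : ℕ) :
    #{x ∈ antidiagonal k | x.1 ≤ a ∧ x.2 ≤ b} = min a k + 1 - (k - b) := by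
  have h : {x ∈ antidiagonal k | x.1 ≤ a ∧ x.2 ≤ b} =
      (Icc (k - b) (min a k)).image (fun i => (i, k - i)) := by
    ext ⟨i, j⟩
    simp only [mem_filter, HasAntidiagonal.mem_antidiagonal, mem_image, mem_Icc, Prod.mk.injEq]
    constructor
    · rintro ⟨hij, hi, hj⟩
      exact ⟨i, by omega, rfl, by omega⟩
    · rintro ⟨i', hi', rfl, rfl⟩
      omega
  rw [h, card_image_of_injective _ fun x y hxy => (Prod.ext_iff.1 hxy).1, Nat.card_Icc]

section TwoSegments

variable {a b : ℕ}

lemma fenceLe_pair_iff {p q : ℕ} :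
    fenceLe [a, b] p q ↔ p = q ∨ (p ≤ q ∧ q ≤ a) ∨ (a ≤ q ∧ q ≤ p ∧ p ≤ a + b) := by
  constructor
  · rintro (h | ⟨j, hj, h⟩)
    · exact Or.inl h
    · simp only [List.length_cons, List.length_nil] at hj
      interval_cases j <;> simp_all
  · rintro (h | h | h)
    · exact Or.inl h
    · exact Or.inr ⟨0, by simp, by simpa using h⟩
    · exact Or.inr ⟨1, by simp, by simpa using h⟩

lemma isFenceIdeal_pair_iff {I : Finset (Fin (a + b + 1))} :
    IsFenceIdeal [a, b] I ↔ ∀ p q : Fin (a + b + 1),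
      ((p : ℕ) ≤ q ∧ (q : ℕ) ≤ a ∨ a ≤ (q : ℕ) ∧ (q : ℕ) ≤ p) → q ∈ I → p ∈ I := by
  refine forall₂_congr fun p q => imp_congr_left ?_
  have hp : (p : ℕ) < a + b + 1 := p.isLt
  rw [fenceLe_pair_iff]
  omega

def pairIdeal (a b i j : ℕ) : Finset (Fin (a + b + 1)) :=
  {p | (p : ℕ) < i ∨ a + b < p + j}

lemma mem_pairIdeal {i j : ℕ} {p : Fin (a + b + 1)} :
    p ∈ pairIdeal a b i j ↔ (p : ℕ) < i ∨ a + b < p + j := by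
  simp [pairIdeal]

lemma isFenceIdeal_pairIdeal {i j : ℕ} (hi : i ≤ a) (hj : j ≤ b) :
    IsFenceIdeal [a, b] (pairIdeal a b i j) := by
  refine isFenceIdeal_pair_iff.2 fun p q hpq hq => ?_
  rw [mem_pairIdeal] at *
  omega

lemma card_pairIdeal {i j : ℕ} (hi : i ≤ a) (hj : j ≤ b) :
    #(pairIdeal a b i j) = i + j := by
  have hval : (pairIdeal a b i j).map Fin.valEmbedding = range i ∪ Ioc (a + b - j) (a + b) := by
    ext m
    simp only [mem_map, mem_pairIdeal, Fin.valEmbedding_apply, Fin.exists_iff, mem_union,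
      mem_range, mem_Ioc]
    constructor
    · rintro ⟨m, hm, hmem, rfl⟩
      omega
    · intro hm
      exact ⟨m, by omega, by omega, rfl⟩
  have hdisj : Disjoint (range i) (Ioc (a + b - j) (a + b)) := by
    rw [disjoint_left]
    intro m h1 h2
    rw [mem_range] at h1
    rw [mem_Ioc] at h2
    omega
  rw [← card_map Fin.valEmbedding, hval, card_union_of_disjoint hdisj, card_range, Nat.card_Ioc]
  omega

lemma pairIdeal_injOn :
    Set.InjOn (fun x : ℕ × ℕ => pairIdeal a b x.1 x.2) {x | x.1 ≤ a ∧ x.2 ≤ b} := by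
  rintro ⟨i, j⟩ ⟨hi, hj⟩ ⟨i', j'⟩ ⟨hi', hj'⟩ h
  simp only at hi hj hi' hj'
  have hmem : ∀ p : Fin (a + b + 1),
      ((p : ℕ) < i ∨ a + b < p + j) ↔ ((p : ℕ) < i' ∨ a + b < p + j') := by
    intro p
    simpa only [mem_pairIdeal] using Finset.ext_iff.1 h p
  have h₁ := hmem ⟨i, by omega⟩
  have h₂ := hmem ⟨i', by omega⟩
  have h₃ := hmem ⟨a + b - j, by omega⟩
  have h₄ := hmem ⟨a + b - j', by omega⟩
  simp only at h₁ h₂ h₃ h₄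
  ext <;> simp only <;> omega

lemma IsFenceIdeal.eq_univ_of_peak_mem {I : Finset (Fin (a + b + 1))}
    (hI : IsFenceIdeal [a, b] I) (hpeak : ⟨a, by omega⟩ ∈ I) : I = univ :=
  eq_univ_iff_forall.2 fun p => isFenceIdeal_pair_iff.1 hI p _ (by simp only; omega) hpeak

lemma IsFenceIdeal.exists_eq_pairIdeal {I : Finset (Fin (a + b + 1))}
    (hI : IsFenceIdeal [a, b] I) (hpeak : ⟨a, by omega⟩ ∉ I) :
    ∃ i ≤ a, ∃ j ≤ b, I = pairIdeal a b i j := by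
  rw [isFenceIdeal_pair_iff] at hI
  obtain ⟨i, hia, hi⟩ := exists_forall_iff_lt_of_downClosed
    (S := fun x => ∀ p : Fin (a + b + 1), (p : ℕ) = x → p ∈ I) (n := a)
    (fun x y hxy hya hy p hp => hI p ⟨y, by omega⟩ (by dsimp only; omega)
      (hy _ rfl))
    (fun h => hpeak (h _ rfl))
  obtain ⟨j, hjb, hj⟩ := exists_forall_iff_lt_of_downClosed
    (S := fun m => ∀ p : Fin (a + b + 1), (p : ℕ) + m = a + b → p ∈ I) (n := b)
    (fun x y hxy hyb hy p hp => hI p ⟨a + b - y, by omega⟩ (by dsimp only; omega)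
      (hy _ (by dsimp only; omega)))
    (fun h => hpeak (h _ rfl))
  refine ⟨i, hia, j, hjb, ext fun p => ?_⟩
  rw [mem_pairIdeal]
  rcases le_or_gt (p : ℕ) a with hp | hp
  · have h := hi p hp
    have hS : (∀ q : Fin (a + b + 1), (q : ℕ) = p → q ∈ I) ↔ p ∈ I :=
      ⟨fun hq => hq p rfl, fun hpI q hq => Fin.ext hq ▸ hpI⟩
    rw [hS] at h
    rw [h]
    omega
  · have h := hj (a + b - p) (by omega)
    have hS : (∀ q : Fin (a + b + 1), (q : ℕ) + (a + b - p) = a + b → q ∈ I) ↔ p ∈ I :=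
      ⟨fun hq => hq p (by omega), fun hpI q hq => (Fin.ext (by omega) : p = q) ▸ hpI⟩
    rw [hS] at h
    rw [h]
    omega

lemma fenceRk_pair_of_le {k : ℕ} (hk : k ≤ a + b) :
    fenceRk [a, b] k = #{x ∈ antidiagonal k | x.1 ≤ a ∧ x.2 ≤ b} := by
  classical
  show Nat.card {I : Finset (Fin (a + b + 1)) // IsFenceIdeal [a, b] I ∧ #I = k} = _
  rw [Nat.card_eq_fintype_card, Fintype.card_subtype]
  symm
  refine card_nbij (fun x => pairIdeal a b x.1 x.2) ?_ ?_ ?_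
  · rintro ⟨i, j⟩ hx
    simp only [coe_filter, HasAntidiagonal.mem_antidiagonal, Set.mem_ofPred_eq, mem_univ,
      true_and] at hx ⊢
    obtain ⟨rfl, hi, hj⟩ := hx
    exact ⟨isFenceIdeal_pairIdeal hi hj, card_pairIdeal hi hj⟩
  · exact pairIdeal_injOn.mono fun x hx => (mem_filter.1 hx).2
  · intro I hI
    simp only [coe_filter, mem_univ, true_and, Set.mem_ofPred_eq] at hI
    obtain ⟨hI, rfl⟩ := hI
    have hpeak : ⟨a, by omega⟩ ∉ I := fun h => by
      rw [hI.eq_univ_of_peak_mem h, card_univ, Fintype.card_fin] at hk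
      omega
    obtain ⟨i, hi, j, hj, rfl⟩ := hI.exists_eq_pairIdeal hpeak
    refine ⟨(i, j), ?_, rfl⟩
    simp only [coe_filter, HasAntidiagonal.mem_antidiagonal, Set.mem_ofPred_eq]
    exact ⟨(card_pairIdeal hi hj).symm, hi, hj⟩

lemma fenceRk_pair_top : fenceRk [a, b] (a + b + 1) = 1 := by
  show Nat.card {I : Finset (Fin (a + b + 1)) // IsFenceIdeal [a, b] I ∧ #I = a + b + 1} = 1
  rw [Nat.card_eq_one_iff_exists]
  exact ⟨⟨univ, fun _ _ _ _ => mem_univ _, by simp⟩,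
    fun I => Subtype.ext (eq_univ_of_card _ (by simp [I.2.2]))⟩

end TwoSegments

theorem fence_two_segments_bottomInterlacing_general (a b : ℕ) :
    BottomInterlacing (fenceRk [a, b]) (a + b + 1) := by
  have hrk : ∀ k ≤ a + b, fenceRk [a, b] k = min a k + 1 - (k - b) := fun k hk => by
    rw [fenceRk_pair_of_le hk, card_antidiagonal_filter_le]
  constructor
  · rintro (_ | i) hi
    · rw [Nat.sub_zero, fenceRk_pair_top, hrk 0 (by omega)]
      omega
    · rw [hrk _ (by omega), hrk _ (by omega)]
      omega
  · intro i hi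
    rw [hrk _ (by omega), hrk _ (by omega)]
    omega

/-- For any two-part composition `α = (a,b)`, the rank sequence of `L(α)` is
bottom interlacing (the rank of `L(α)` is `n = a + b + 1`). -/
theorem fence_two_segments_bottomInterlacing (a b : ℕ) (ha : 0 < a) (hb : 0 < b) :
    BottomInterlacing (fenceRk [a, b]) (a + b + 1) :=
  fence_two_segments_bottomInterlacing_general a b
end
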